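/- arXiv:2007.02488 — 3 statements merged into one kernel-verified Lean document; each statement's English description precedes it below -/
import Mathlib

section
/- For all real z ≤ 0, the polynomial g(z) = 1 + (4/5)z + (3/10)z² + (1/15)z³ + (1/120)z⁴ is strictly positive. -/
theorem g_pos_of_nonpos (z : ℝ) (hz : z ≤ 0) :
    1 + (4/5) * z + (3/10) * z^2 + (1/15) * z^3 + (1/120) * z^4 > 0 := by
  nlinarith [sq_nonneg (z^2 + 4*z), sq_nonneg (z^2 + 2*z), sq_nonneg z, sq_nonneg (z+1), sq_nonneg (z+2), sq_nonneg (z^2+3*z+1), mul_nonneg (mul_nonneg (neg_nonneg.2 hz) (neg_nonneg.2 hz)) (neg_nonneg.2 hz)]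
end

section
/- Let f(z,C) = 1 + z + z²/2 + z³/6 + z⁴/24 + C z⁵/120. If z* < 0 satisfies ∂f/∂z(z*,C) = 0 (i.e. 1 + z* + z*²/2 + z*³/6 + C z*⁴/24 = 0), then f(z*,C) > 0. -/
theorem critical_value_pos (C z : ℝ) (hz : z < 0)
    (hcrit : 1 + z + z^2/2 + z^3/6 + C * z^4/24 = 0) :
    1 + z + z^2/2 + z^3/6 + z^4/24 + C * z^5/120 > 0 := by
  have h4 : C * z^4 = -(24 + 24*z + 12*z^2 + 4*z^3) := by linarith
  have h5 : C * z^5 = z * (-(24 + 24*z + 12*z^2 + 4*z^3)) := by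
    have : C * z^5 = z * (C * z^4) := by ring
    rw [this, h4]
  rw [h5]
  nlinarith [sq_nonneg (z^2 + 4*z), sq_nonneg (z + 12/5)]
end

section
/- If 0 < C < 5/6, then g(0,C) = 240C - 200 < 0 and g(8,C) = 16C(4C - 5) < 0; hence the quadratic g(η,C) = C²η² + (25-40C)η + (240C-200) has exactly one root η₊ > 8 in (0,∞), and {η ≥ 0 : g(η,C) ≤ 0} = [0, η₊]. In particular the imaginary-axis stability interval [-√η₊, √η₊] strictly contains [-2√2, 2√2]. -/
set_option maxHeartbeats 1600000 in
theorem C_small_pos_imaginary (C : ℝ) (hC0 : 0 < C) (hC : C < 5/6) :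
    240 * C - 200 < 0 ∧
    16 * C * (4 * C - 5) < 0 ∧
    ∃ ηp : ℝ, ηp > 8 ∧
      C^2 * ηp^2 + 5 * (5 - 8 * C) * ηp + 40 * (6 * C - 5) = 0 ∧
      (∀ η : ℝ, η > 0 →
        C^2 * η^2 + 5 * (5 - 8 * C) * η + 40 * (6 * C - 5) = 0 → η = ηp) ∧
      {η : ℝ | 0 ≤ η ∧ C^2 * η^2 + 5 * (5 - 8 * C) * η + 40 * (6 * C - 5) ≤ 0}
        = Set.Icc 0 ηp ∧
      Set.Icc (-(2 * Real.sqrt 2)) (2 * Real.sqrt 2)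
        ⊂ Set.Icc (-Real.sqrt ηp) (Real.sqrt ηp) := by
  have ha : (0:ℝ) < C^2 := by positivity
  have hc : 40 * (6 * C - 5) < 0 := by nlinarith
  refine ⟨by linarith, by nlinarith, ?_⟩
  set a : ℝ := C^2 with ha_def
  set b : ℝ := 5 * (5 - 8 * C) with hb_def
  set c : ℝ := 40 * (6 * C - 5) with hc_def
  have hg8 : a * 8^2 + b * 8 + c < 0 := by rw [ha_def, hb_def, hc_def]; nlinarith
  have hdisc : 0 < b^2 - 4*a*c := by nlinarith
  set s : ℝ := Real.sqrt (b^2 - 4*a*c) with hs_def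
  have hs2 : s^2 = b^2 - 4*a*c := Real.sq_sqrt hdisc.le
  have hs0 : 0 ≤ s := Real.sqrt_nonneg _
  set ηp : ℝ := (-b + s) / (2*a) with hp_def
  have hroot : a * ηp^2 + b * ηp + c = 0 := by
    rw [hp_def]; field_simp; nlinarith [hs2]
  have h1 : b + 16*a < s := by nlinarith [hs2, hs0, hg8, sq_nonneg (s - (b + 16*a))]
  have hgt : ηp > 8 := by
    rw [hp_def, gt_iff_lt, lt_div_iff₀ (by positivity)]; linarith
  refine ⟨ηp, hgt, hroot, ?_, ?_, ?_⟩
  · intro η hη hroot'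
    by_contra hne
    have hfac : (η - ηp) * (a * (η + ηp) + b) = 0 := by linear_combination hroot' - hroot
    have h2 : a * (η + ηp) + b = 0 := by
      rcases mul_eq_zero.mp hfac with h | h
      · exact absurd (by linarith) hne
      · exact h
    have : c = a * η * ηp := by nlinarith [hroot', h2]
    nlinarith [mul_pos (mul_pos ha hη) (by linarith : (0:ℝ) < ηp)]
  · ext η
    simp only [Set.mem_setOf_eq, Set.mem_Icc]
    have hpb : 0 < a * ηp + b := by
      have h2 : ηp * (a * ηp + b) > 0 := by nlinarith [hroot]
      nlinarith [h2, hgt]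
    constructor
    · rintro ⟨h0, hg⟩
      refine ⟨h0, ?_⟩
      by_contra hlt
      push_neg at hlt
      have hfac : a * η^2 + b * η + c = (η - ηp) * (a * (η + ηp) + b) := by
        linear_combination hroot
      have haη : 0 ≤ a * η := mul_nonneg ha.le h0
      have hpos : (0:ℝ) < a * (η + ηp) + b := by linarith [mul_nonneg ha.le h0, hpb, haη, (by ring : a * (η + ηp) + b = a * η + (a * ηp + b))]
      have := mul_pos (sub_pos.mpr hlt) hpos
      linarith [hfac, hg]
    · rintro ⟨h0, h1⟩
      refine ⟨h0, ?_⟩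
      have hfac : a * η^2 + b * η + c = (η - ηp) * (a * (η + ηp) + b) := by
        linear_combination hroot
      rw [hfac]
      apply mul_nonpos_of_nonpos_of_nonneg (by linarith)
      have haη : 0 ≤ a * η := mul_nonneg ha.le h0
      linarith [(by ring : a * (η + ηp) + b = a * η + (a * ηp + b))]
  · have h8 : Real.sqrt 8 = 2 * Real.sqrt 2 := by
      rw [show (8:ℝ) = 2^2 * 2 by norm_num, Real.sqrt_mul (by positivity),
        Real.sqrt_sq (by norm_num : (0:ℝ) ≤ 2)]
    have hlt : 2 * Real.sqrt 2 < Real.sqrt ηp := by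
      rw [← h8]; exact Real.sqrt_lt_sqrt (by norm_num) hgt
    have h2pos : 0 ≤ 2 * Real.sqrt 2 := by positivity
    exact Set.Icc_ssubset_Icc_right (by linarith [Real.sqrt_nonneg ηp])
      (by linarith) hlt
end
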